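/- In the intermediate semantics, each non-Async, non-Return_A rule preserves the multiset of object references in the active list (it is a rotation), the (Async) rule yields a list whose underlying set is the old set possibly extended with the callee object, and the (Return_A) rule yields a list whose underlying set is the old set possibly with the executing object removed (exactly when its queue became empty). -/
import Mathlib


/-- Runtime values: integers, object references, future references. -/
inductive Val where
  | int : Int → Val
  | obj : Nat → Val
  | fut : Nat → Val
deriving DecidableEq

/-- Side-effect free expressions. -/
inductive Expr where
  | attr : Nat → Expr
  | param : Nat → Expr
  | val : Val → Expr
  | add : Expr → Expr → Expr
  | sub : Expr → Expr → Expr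
deriving DecidableEq

/-- Boolean guards. -/
inductive BExpr where
  | band : BExpr → BExpr → BExpr
  | bor : BExpr → BExpr → BExpr
  | bnot : BExpr → BExpr
  | beq : Expr → Expr → BExpr
deriving DecidableEq

/-- Statements of the ABS subset.  A `ret z m` with `m = none` is an
unmarked `return z`; `m = some none` is `return* z` (asynchronous mark);
`m = some (some w)` is `return^w z` (write-back mark). -/
inductive Stmt where
  | assign : Nat → Expr → Stmt                  -- x := E
  | newObj : Nat → Stmt                         -- x := new
  | get : Nat → Nat → Stmt                      -- x := f.get
  | async : Nat → Nat → Nat → List Nat → Stmt   -- f := x!m(ȳ)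
  | sync : Nat → Nat → List Nat → Stmt          -- x := m(ȳ)
  | await : Nat → Stmt                          -- await f
  | skip : Stmt
  | ret : Nat → Option (Option Nat) → Stmt      -- return z (possibly marked)
  | seq : Stmt → Stmt → Stmt
  | ite : BExpr → Stmt → Stmt → Stmt
  | while : BExpr → Stmt → Stmt
deriving DecidableEq

/-- The marking function  Ŝ^s : replace the final `return z` by `return^s z`.
`s = none` is the asynchronous mark `*`; `s = some w` is the write-back mark `w`. -/
def mark (s : Option Nat) : Stmt → Stmt
  | .seq s1 s2 => .seq s1 (mark s s2)
  | .ret z none => .ret z (some s)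
  | t => t

/-- Substitution of method parameters by values. -/
def substE (τ : Nat → Option Val) : Expr → Expr
  | .param r => match τ r with | some v => .val v | none => .param r
  | .add a b => .add (substE τ a) (substE τ b)
  | .sub a b => .sub (substE τ a) (substE τ b)
  | e => e

def substB (τ : Nat → Option Val) : BExpr → BExpr
  | .band a b => .band (substB τ a) (substB τ b)
  | .bor a b => .bor (substB τ a) (substB τ b)
  | .bnot a => .bnot (substB τ a)
  | .beq a b => .beq (substE τ a) (substE τ b)

def subst (τ : Nat → Option Val) : Stmt → Stmt
  | .assign x e => .assign x (substE τ e)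
  | .seq a b => .seq (subst τ a) (subst τ b)
  | .ite b s1 s2 => .ite (substB τ b) (subst τ s1) (subst τ s2)
  | .while b s => .while (substB τ b) (subst τ s)
  | s => s

/-- The global heap: a counter for fresh references, the local stores of
the existing objects, and the values of the existing futures
(`some none` = unresolved future `⊥`). -/
structure Heap where
  count : Nat
  objs : Nat → Option (Nat → Val)
  futs : Nat → Option (Option Val)

def Heap.store (h : Heap) (n : Nat) : Nat → Val := (h.objs n).getD (fun _ => .int 0)

def Heap.setAttr (h : Heap) (n x : Nat) (v : Val) : Heap :=
  { h with objs := fun m => if m = n then some (Function.update (h.store n) x v) else h.objs m }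

def Heap.allocObj (h : Heap) : Heap :=
  { h with count := h.count + 1,
           objs := fun m => if m = h.count then some (fun _ => .int 0) else h.objs m }

def Heap.setFut (h : Heap) (l : Nat) (v : Option Val) : Heap :=
  { h with futs := fun m => if m = l then some v else h.futs m }

def Heap.allocFut (h : Heap) : Heap :=
  { h with count := h.count + 1,
           futs := fun m => if m = h.count then some none else h.futs m }

def Val.toInt : Val → Int
  | .int i => i
  | _ => 0

def evalE (σ : Nat → Val) : Expr → Val
  | .attr x => σ x
  | .param _ => .int 0
  | .val v => v
  | .add a b => .int ((evalE σ a).toInt + (evalE σ b).toInt)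
  | .sub a b => .int ((evalE σ a).toInt - (evalE σ b).toInt)

def evalB (σ : Nat → Val) : BExpr → Bool
  | .band a b => evalB σ a && evalB σ b
  | .bor a b => evalB σ a || evalB σ b
  | .bnot a => ! evalB σ a
  | .beq a b => decide (evalE σ a = evalE σ b)

/-- A closure: statement together with its destiny future. -/
abbrev Closure := Stmt × Nat

/-- A program: a method table mapping method names to formal parameters
and body. -/
abbrev Prog := Nat → Option (List Nat × Stmt)

/-- Substitution [w̄ ↦ v̄]. -/
def mkSubst (ws : List Nat) (vs : List Val) : Nat → Option Val :=
  fun r => (ws.zip vs).lookup r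

/-- Names of the local rules. -/
inductive RuleTag where
  | assign | new | get | awaitI | awaitII | async | sync | retA | retS | ctrl
deriving DecidableEq

/-- Step decorations: either internal (τ) or an asynchronous-call message
`d.m(l',v̄)`. -/
inductive MsgLabel where
  | tau : MsgLabel
  | msg : Nat → Nat → Nat → List Val → MsgLabel
deriving DecidableEq

/-- Local semantics of Fig. 5 (plus the standard rules for `skip`,
sequencing, `if` and `while`). `LStep D n Q h t lab Q' h'` means that
object `n` performs one step, executing the head statement of its active
process, by the rule named `t` with decoration `lab`. -/
inductive LStep (D : Prog) (n : Nat) :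
    List Closure → Heap → RuleTag → MsgLabel → List Closure → Heap → Prop where
  | assign {x e S l q h} :
      LStep D n ((.seq (.assign x e) S, l) :: q) h .assign .tau
        ((S, l) :: q) (h.setAttr n x (evalE (h.store n) e))
  | newObj {x S l q h} :
      LStep D n ((.seq (.newObj x) S, l) :: q) h .new .tau
        ((S, l) :: q) ((h.setAttr n x (.obj h.count)).allocObj)
  | get {x f r v S l q h} :
      h.store n f = .fut r →
      h.futs r = some (some v) →
      LStep D n ((.seq (.get x f) S, l) :: q) h .get .tau
        ((S, l) :: q) (h.setAttr n x v)
  | awaitI {f r v S l q h} :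
      h.store n f = .fut r →
      h.futs r = some (some v) →
      LStep D n ((.seq (.await f) S, l) :: q) h .awaitI .tau ((S, l) :: q) h
  | awaitII {f r S l q h} :
      h.store n f = .fut r →
      h.futs r = some none →
      LStep D n ((.seq (.await f) S, l) :: q) h .awaitII .tau
        (q ++ [(.seq (.await f) S, l)]) h
  | async {f x m ys d S l q h} :
      h.store n x = .obj d →
      LStep D n ((.seq (.async f x m ys) S, l) :: q) h .async
        (.msg d m h.count (ys.map (h.store n)))
        ((S, l) :: q) ((h.setAttr n f (.fut h.count)).allocFut)
  | sync {x m ys ws Sm S l q h} :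
      D m = some (ws, Sm) →
      LStep D n ((.seq (.sync x m ys) S, l) :: q) h .sync .tau
        ((.seq (mark (some x) (subst (mkSubst ws (ys.map (h.store n))) Sm)) S, l) :: q) h
  | retA {z S l q h} :
      LStep D n ((.seq (.ret z (some none)) S, l) :: q) h .retA .tau
        q (h.setFut l (some (h.store n z)))
  | retS {z w S l q h} :
      LStep D n ((.seq (.ret z (some (some w))) S, l) :: q) h .retS .tau
        ((S, l) :: q) (h.setAttr n w (h.store n z))
  | skip {S l q h} :
      LStep D n ((.seq .skip S, l) :: q) h .ctrl .tau ((S, l) :: q) h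
  | ite {b s1 s2 S l q h} :
      LStep D n ((.seq (.ite b s1 s2) S, l) :: q) h .ctrl .tau
        (((if evalB (h.store n) b then Stmt.seq s1 S else Stmt.seq s2 S), l) :: q) h
  | whileLoop {b s S l q h} :
      LStep D n ((.seq (.while b s) S, l) :: q) h .ctrl .tau
        (((if evalB (h.store n) b then Stmt.seq s (.seq (.while b s) S) else S), l) :: q) h
  | seqAssoc {s1 s2 s3 l q h} :
      LStep D n ((.seq (.seq s1 s2) s3, l) :: q) h .ctrl .tau
        ((.seq s1 (.seq s2 s3), l) :: q) h

/-- The atomic statement at the head of the active process of a queue. -/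
def headAtom : List Closure → Option Stmt
  | (Stmt.seq a _, _) :: _ => some a
  | _ => none

/-- Global semantics of Fig. 6.  A configuration is a family of process
queues `C` together with a heap.  Steps are decorated with the executing
object and the executed statement. -/
inductive GStep (D : Prog) :
    (Nat → List Closure) → Heap → Nat → Stmt → (Nat → List Closure) → Heap → Prop where
  | internal {C h n t Q' h' S} :
      t ≠ RuleTag.async →
      LStep D n (C n) h t .tau Q' h' →
      headAtom (C n) = some S →
      GStep D C h n S (Function.update C n Q') h'
  | message {C h n Q' h' d m l' vs ws Sm S} :
      LStep D n (C n) h .async (.msg d m l' vs) Q' h' →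
      D m = some (ws, Sm) →
      headAtom (C n) = some S →
      GStep D C h n S
        (Function.update (Function.update C n Q') d
          ((Function.update C n Q' d) ++
            [(Stmt.seq (mark none (subst (mkSubst ws vs) Sm)) Stmt.skip, l')]))
        h'

/-- Right-hand sides of the target language. -/
inductive Rhs where
  | val : Expr → Rhs
  | new : Rhs
  | get : Nat → Rhs
  | async : Nat → Nat → List Nat → Rhs
  | sync : Nat → List Nat → Rhs
deriving DecidableEq

/-- The target CPS AST `Stm`.  Each constructor carries its current
continuation; `nil` is the empty continuation (the hole used when
compiling the bodies of `If`/`While`). -/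
inductive Stm where
  | skip : Stm → Stm
  | await : Nat → Stm → Stm
  | assign : Nat → Rhs → Stm → Stm
  | ite : BExpr → Stm → Stm → Stm → Stm
  | while : BExpr → Stm → Stm → Stm
  | ret : Nat → Option Nat → Stm → Stm
  | nil : Stm
deriving DecidableEq

/-- The compilation ⟦S⟧(k,wb) of ABS statements to the target AST. -/
def compile (wb : Option Nat) : Stmt → Stm → Stm
  | .assign x e, k => .assign x (.val e) k
  | .newObj x, k => .assign x .new k
  | .get x f, k => .assign x (.get f) k
  | .async f x m ys, k => .assign f (.async x m ys) k
  | .sync x m ys, k => .assign x (.sync m ys) k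
  | .skip, k => .skip k
  | .await f, k => .await f k
  | .ret z none, k => .ret z wb k
  | .ret z (some none), k => .ret z none k
  | .ret z (some (some w)), k => .ret z (some w) k
  | .seq s1 s2, k => compile wb s1 (compile wb s2 k)
  | .ite b s1 s2, k => .ite b (compile wb s1 .nil) (compile wb s2 .nil) k
  | .while b s, k => .while b (compile wb s .nil) k

/-- Inverse of the compilation of atomic right-hand sides. -/
def rhsToStmt (x : Nat) : Rhs → Stmt
  | .val e => .assign x e
  | .new => .newObj x
  | .get f => .get x f
  | .async y m ys => .async x y m ys
  | .sync m ys => .sync x m ys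

/-- The target heap: the source heap together with, for every object, its
process queue of compiled closures (the distinguished key `Q`). -/
structure THeap where
  base : Heap
  queues : Nat → List (Stm × Nat)

def THeap.setQ (th : THeap) (n : Nat) (q : List (Stm × Nat)) : THeap :=
  { th with queues := Function.update th.queues n q }

def THeap.setAttrT (th : THeap) (n x : Nat) (v : Val) : THeap :=
  { th with base := th.base.setAttr n x v }

def THeap.store (th : THeap) (n : Nat) : Nat → Val := th.base.store n

/-- Rotation of the active-object list past (0-based) position `i`. -/
def rotI {α : Type*} (i : Nat) (s : List α) : List α := s.drop (i + 1) ++ s.take (i + 1)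

/-- Decompilation of target statements to (right-nested, runtime) source
statements. -/
def decompile : Stm → Stmt
  | .nil => .skip
  | .skip k => .seq .skip (decompile k)
  | .await f k => .seq (.await f) (decompile k)
  | .assign x r k => .seq (rhsToStmt x r) (decompile k)
  | .ite b t e k => .seq (.ite b (decompile t) (decompile e)) (decompile k)
  | .while b s k => .seq (.while b (decompile s)) (decompile k)
  | .ret z w k => .seq (.ret z (some w)) (decompile k)

/-- The inverse configuration translation ⌞·⌟ : read the queues out of
the heap and decompile their statements. -/
def invC (th : THeap) : (Nat → List Closure) × Heap :=
  (fun n => (th.queues n).map (fun cl => (decompile cl.1, cl.2)), th.base)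

/-- An object is blocked when its active process is waiting for an
unresolved future in a `get` statement. -/
def blockedO (th : THeap) (o : Nat) : Prop :=
  ∃ x f k l q r, th.queues o = (Stm.assign x (.get f) k, l) :: q ∧
    th.store o f = .fut r ∧ th.base.futs r = some none

/-- `IsNext th s i o`: `o`, at position `i` of the active-object list
`s`, is the first unblocked object. -/
def IsNext (th : THeap) (s : List Nat) (i : Nat) (o : Nat) : Prop :=
  s[i]? = some o ∧ ¬ blockedO th o ∧
  ∀ j < i, ∀ o', s[j]? = some o' → blockedO th o'

/-- The intermediate round-robin semantics ↣ of Fig. 7.  A step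
`IStep D th s o res t th' s'` executes, in the first unblocked object `o`
of the list `s`, the source statement `res` by the rule named `t`. -/
inductive IStep (D : Prog) :
    THeap → List Nat → Nat → Stmt → RuleTag → THeap → List Nat → Prop where
  | assign {th s i o x e k l q} :
      IsNext th s i o →
      th.queues o = (Stm.assign x (.val e) k, l) :: q →
      IStep D th s o (.assign x e) .assign
        ((th.setAttrT o x (evalE (th.store o) e)).setQ o ((k, l) :: q))
        (rotI i s)
  | newObj {th s i o x k l q} :
      IsNext th s i o →
      th.queues o = (Stm.assign x .new k, l) :: q →
      IStep D th s o (.newObj x) .new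
        ((({ base := (th.base.setAttr o x (.obj th.base.count)).allocObj,
             queues := th.queues : THeap }).setQ th.base.count []).setQ o ((k, l) :: q))
        (rotI i s)
  | get {th s i o x f r v k l q} :
      IsNext th s i o →
      th.queues o = (Stm.assign x (.get f) k, l) :: q →
      th.store o f = .fut r →
      th.base.futs r = some (some v) →
      IStep D th s o (.get x f) .get
        ((th.setAttrT o x v).setQ o ((k, l) :: q)) (rotI i s)
  | awaitI {th s i o f r v k l q} :
      IsNext th s i o →
      th.queues o = (Stm.await f k, l) :: q →
      th.store o f = .fut r →
      th.base.futs r = some (some v) →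
      IStep D th s o (.await f) .awaitI (th.setQ o ((k, l) :: q)) (rotI i s)
  | awaitII {th s i o f r k l q} :
      IsNext th s i o →
      th.queues o = (Stm.await f k, l) :: q →
      th.store o f = .fut r →
      th.base.futs r = some none →
      IStep D th s o (.await f) .awaitII
        (th.setQ o (q ++ [(Stm.await f k, l)])) (rotI i s)
  | async {th s i o f x m ys d k l q qd ws Sm} :
      IsNext th s i o →
      th.queues o = (Stm.assign f (.async x m ys) k, l) :: q →
      th.store o x = .obj d →
      th.queues d = qd →
      D m = some (ws, Sm) →
      IStep D th s o (.async f x m ys) .async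
        ((({ base := ((th.base.setAttr o f (.fut th.base.count)).allocFut),
             queues := th.queues : THeap }).setQ o ((k, l) :: q)).setQ d
           (qd ++ [(compile none (subst (mkSubst ws (ys.map (th.store o))) Sm) .nil,
                    th.base.count)]))
        (if d ∈ s then rotI i s else rotI i s ++ [d])
  | sync {th s i o x m ys k l q ws Sm} :
      IsNext th s i o →
      th.queues o = (Stm.assign x (.sync m ys) k, l) :: q →
      D m = some (ws, Sm) →
      IStep D th s o (.sync x m ys) .sync
        (th.setQ o ((compile (some x) (subst (mkSubst ws (ys.map (th.store o))) Sm) k, l) :: q))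
        (rotI i s)
  | retA {th s i o z k l q} :
      IsNext th s i o →
      th.queues o = (Stm.ret z none k, l) :: q →
      IStep D th s o (.ret z (some none)) .retA
        (({ base := th.base.setFut l (some (th.store o z)),
            queues := th.queues : THeap }).setQ o q)
        (if q = [] then s.drop (i + 1) ++ s.take i else rotI i s)
  | retS {th s i o z w k l q} :
      IsNext th s i o →
      th.queues o = (Stm.ret z (some w) k, l) :: q →
      IStep D th s o (.ret z (some (some w))) .retS
        ((th.setAttrT o w (th.store o z)).setQ o ((k, l) :: q)) (rotI i s)

lemma rotI_perm {α : Type*} (i : Nat) (s : List α) : (rotI i s).Perm s := by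
  simpa [rotI] using
    (List.perm_append_comm.trans (by rw [List.take_append_drop] :
      (s.take (i+1) ++ s.drop (i+1)).Perm s))

lemma isnext_lt {th : THeap} {s : List Nat} {i o : Nat} (h : IsNext th s i o) :
    i < s.length := by
  have := h.1
  exact (List.getElem?_eq_some_iff.mp this).1

lemma split_perm {s : List Nat} {i o : Nat} (h : s[i]? = some o) :
    (s.drop (i + 1) ++ s.take i).Perm (s.erase o) := by
  obtain ⟨hlt, hg⟩ := List.getElem?_eq_some_iff.mp h
  have hmem : o ∈ s := hg ▸ List.getElem_mem hlt
  have hsplit : s.take i ++ o :: s.drop (i + 1) = s := by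
    rw [← hg, List.getElem_cons_drop, List.take_append_drop]
  have h1 : s.Perm (o :: (s.take i ++ s.drop (i + 1))) := by
    conv_lhs => rw [← hsplit]
    exact List.perm_middle
  have h2 : s.Perm (o :: s.erase o) := List.perm_cons_erase hmem
  have h3 := (h2.symm.trans h1).cons_inv
  exact (List.perm_append_comm).trans h3.symm

/-- effect of the intermediate-semantics rules on the
active-object list: every rule other than (Async) and (Return_A) yields a
rotation of the list (hence preserves its multiset of object references);
(Async) yields the old list possibly extended with the callee object; and
(Return_A) yields the old list possibly with the executing object removed,
exactly when its process queue became empty. -/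
theorem istep_object_list {D : Prog} {th th' : THeap}
    {s s' : List Nat} {o : Nat} {res : Stmt} {t : RuleTag}
    (hstep : IStep D th s o res t th' s') :
    (t ≠ RuleTag.async → t ≠ RuleTag.retA →
      (∃ i, i < s.length ∧ s' = rotI i s) ∧ s'.Perm s) ∧
    (t = RuleTag.async →
      ∃ d, (d ∈ s ∧ s'.Perm s) ∨ (d ∉ s ∧ s'.Perm (s ++ [d]))) ∧
    (t = RuleTag.retA →
      (th'.queues o = [] ∧ s'.Perm (s.erase o)) ∨
      (th'.queues o ≠ [] ∧ s'.Perm s)) := by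
  have easy : ∀ (i : Nat), i < s.length → ∀ t : RuleTag, t ≠ RuleTag.async →
      t ≠ RuleTag.retA →
      ((t ≠ RuleTag.async → t ≠ RuleTag.retA →
        (∃ j, j < s.length ∧ rotI i s = rotI j s) ∧ (rotI i s).Perm s) ∧
       (t = RuleTag.async → ∃ d : Nat,
          (d ∈ s ∧ (rotI i s).Perm s) ∨ (d ∉ s ∧ (rotI i s).Perm (s ++ [d]))) ∧
       (t = RuleTag.retA → True)) := by
    intro i hi t ha hr
    exact ⟨fun _ _ => ⟨⟨i, hi, rfl⟩, rotI_perm _ _⟩, fun h => absurd h ha,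
      fun _ => trivial⟩
  cases hstep with
  | assign hn _ =>
      exact ⟨fun _ _ => ⟨⟨_, isnext_lt hn, rfl⟩, rotI_perm _ _⟩,
        fun h => by simp at h, fun h => by simp at h⟩
  | newObj hn _ =>
      exact ⟨fun _ _ => ⟨⟨_, isnext_lt hn, rfl⟩, rotI_perm _ _⟩,
        fun h => by simp at h, fun h => by simp at h⟩
  | get hn _ _ _ =>
      exact ⟨fun _ _ => ⟨⟨_, isnext_lt hn, rfl⟩, rotI_perm _ _⟩,
        fun h => by simp at h, fun h => by simp at h⟩
  | awaitI hn _ _ _ =>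
      exact ⟨fun _ _ => ⟨⟨_, isnext_lt hn, rfl⟩, rotI_perm _ _⟩,
        fun h => by simp at h, fun h => by simp at h⟩
  | awaitII hn _ _ _ =>
      exact ⟨fun _ _ => ⟨⟨_, isnext_lt hn, rfl⟩, rotI_perm _ _⟩,
        fun h => by simp at h, fun h => by simp at h⟩
  | sync hn _ _ =>
      exact ⟨fun _ _ => ⟨⟨_, isnext_lt hn, rfl⟩, rotI_perm _ _⟩,
        fun h => by simp at h, fun h => by simp at h⟩
  | retS hn _ =>
      exact ⟨fun _ _ => ⟨⟨_, isnext_lt hn, rfl⟩, rotI_perm _ _⟩,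
        fun h => by simp at h, fun h => by simp at h⟩
  | @async i o f x m ys d k l q qd ws Sm hn _ _ _ _ =>
      refine ⟨fun h _ => absurd rfl h, fun _ => ⟨d, ?_⟩, fun h => by simp at h⟩
      by_cases hd : d ∈ s
      · exact Or.inl ⟨hd, by simpa [hd] using rotI_perm i s⟩
      · exact Or.inr ⟨hd, by simpa [hd] using (rotI_perm i s).append_right [d]⟩
  | @retA i o z k l q hn _ =>
      refine ⟨fun _ h => absurd rfl h, fun h => by simp at h, fun _ => ?_⟩
      simp only [THeap.setQ, Function.update_self]
      by_cases hq : q = []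
      · exact Or.inl ⟨hq, by simpa [hq] using split_perm hn.1⟩
      · exact Or.inr ⟨hq, by simpa [hq] using rotI_perm i s⟩
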